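/- Let p > 1, λ ∈ ℝ, and let ω(x,t) = t^{p-1} log^λ(4/t) for (x,t) ∈ ℝ^{d+1}_+ with 0 < t ≤ 1. Then ω is not a Muckenhoupt A_p weight: there is no constant C > 0 such that for every cube Q ⊂ ℝ^{d+1}_+ one has (⨍_Q ω dm)(⨍_Q ω^{-1/(p-1)} dm)^{p-1} ≤ C. -/

import Mathlib

open MeasureTheory Real Set
open scoped ENNReal

/-- The borderline weight `ω(x,t) = t^{p-1} (log (4/t))^λ` for `0 < t ≤ 1`
(extended by `(log 4)^λ` for `t > 1`). -/
noncomputable def borderWeight (d : ℕ) (p l : ℝ) (y : Fin (d + 1) → ℝ) : ℝ :=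
  if y (Fin.last d) ≤ 1 then
    (y (Fin.last d)) ^ (p - 1) * (Real.log (4 / y (Fin.last d))) ^ l
  else (Real.log 4) ^ l

/-- 1-d version of the weight. -/
noncomputable def wfn (p l : ℝ) (t : ℝ) : ℝ :=
  if t ≤ 1 then t ^ (p - 1) * (Real.log (4 / t)) ^ l else (Real.log 4) ^ l

lemma borderWeight_eq (d : ℕ) (p l : ℝ) (y : Fin (d + 1) → ℝ) :
    borderWeight d p l y = wfn p l (y (Fin.last d)) := rfl

lemma wfn_meas (p l : ℝ) : Measurable (wfn p l) := by
  apply Measurable.ite (measurableSet_le measurable_id measurable_const)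
  · exact ((measurable_id.pow measurable_const).mul
      (((measurable_const.div measurable_id).log).pow measurable_const))
  · exact measurable_const

lemma lint_pi (d : ℕ) (g : ℝ → ℝ≥0∞) (hg : Measurable g) (h : ℝ) :
    ∫⁻ y in Set.univ.pi (fun _ : Fin (d+1) => Set.Ioc 0 h), g (y (Fin.last d)) =
      (volume (Set.Ioc (0:ℝ) h))^d * ∫⁻ t in Set.Ioc (0:ℝ) h, g t := by
  set e := MeasurableEquiv.piFinSuccAbove (fun _ : Fin (d+1) => ℝ) (Fin.last d) with he
  have mp : MeasurePreserving e volume volume :=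
    volume_preserving_piFinSuccAbove (fun _ : Fin (d+1) => ℝ) (Fin.last d)
  have hset : Set.univ.pi (fun _ : Fin (d+1) => Set.Ioc (0:ℝ) h) =
      e ⁻¹' ((Set.Ioc (0:ℝ) h) ×ˢ (Set.univ.pi (fun _ : Fin d => Set.Ioc (0:ℝ) h))) := by
    ext y
    simp only [Set.mem_pi, Set.mem_univ, forall_true_left, Set.mem_preimage,
      Set.mem_prod, he, MeasurableEquiv.piFinSuccAbove_apply]
    rw [Fin.forall_iff_succAbove (Fin.last d)]
    tauto
  have hfun : ∀ y : Fin (d+1) → ℝ, g (y (Fin.last d)) = (fun z : ℝ × (Fin d → ℝ) => g z.1) (e y) := by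
    intro y; simp [he, MeasurableEquiv.piFinSuccAbove_apply]
  calc ∫⁻ y in Set.univ.pi (fun _ : Fin (d+1) => Set.Ioc 0 h), g (y (Fin.last d))
      = ∫⁻ y in e ⁻¹' ((Set.Ioc (0:ℝ) h) ×ˢ (Set.univ.pi (fun _ : Fin d => Set.Ioc (0:ℝ) h))),
          (fun z : ℝ × (Fin d → ℝ) => g z.1) (e y) := by
        rw [← hset]
        exact setLIntegral_congr_fun
          (by rw [hset]
              exact e.measurable (measurableSet_Ioc.prod
                (MeasurableSet.univ_pi fun _ => measurableSet_Ioc)))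
          (fun y _ => hfun y)
    _ = ∫⁻ z in (Set.Ioc (0:ℝ) h) ×ˢ (Set.univ.pi (fun _ : Fin d => Set.Ioc (0:ℝ) h)),
          g z.1 := by
        apply mp.setLIntegral_comp_preimage_emb e.measurableEmbedding
          (fun z : ℝ × (Fin d → ℝ) => g z.1)
    _ = (volume (Set.Ioc (0:ℝ) h))^d * ∫⁻ t in Set.Ioc (0:ℝ) h, g t := by
        rw [Measure.volume_eq_prod, ← Measure.prod_restrict]
        have h2 := lintegral_prod_mul (μ := (volume : Measure ℝ).restrict (Set.Ioc 0 h))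
          (ν := (volume : Measure (Fin d → ℝ)).restrict (Set.univ.pi fun _ => Set.Ioc 0 h))
          hg.aemeasurable (aemeasurable_const (b := (1:ℝ≥0∞)))
        simp only [mul_one, lintegral_const, Measure.restrict_apply_univ, one_mul] at h2
        rw [h2]
        have h3 : volume (Set.univ.pi (fun _ : Fin d => Set.Ioc (0:ℝ) h)) =
            (volume (Set.Ioc (0:ℝ) h))^d := by
          rw [volume_pi_pi]; simp [Finset.prod_const]
        rw [h3]; ring

/-- dyadic shell -/
def shl (m : ℕ) : Set ℝ := Set.Ioc ((2:ℝ)⁻¹^(m+1)) ((2:ℝ)⁻¹^m)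

lemma shl_subset {m : ℕ} {h : ℝ} (hm : (2:ℝ)⁻¹^m ≤ h) : shl m ⊆ Set.Ioc 0 h := by
  intro t ht
  exact ⟨lt_of_le_of_lt (by positivity) ht.1, ht.2.trans hm⟩

lemma shl_disj : Pairwise (Function.onFun Disjoint shl) := by
  intro m n hmn
  wlog hlt : m < n generalizing m n
  · exact (this hmn.symm (by omega)).symm
  rw [Function.onFun, shl, shl, Set.Ioc_disjoint_Ioc]
  have h1 : (2:ℝ)⁻¹^n ≤ (2:ℝ)⁻¹^(m+1) :=
    pow_le_pow_of_le_one (by norm_num) (by norm_num) (by omega)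
  calc min ((2:ℝ)⁻¹^m) ((2:ℝ)⁻¹^n) ≤ (2:ℝ)⁻¹^n := min_le_right _ _
    _ ≤ (2:ℝ)⁻¹^(m+1) := h1
    _ ≤ max ((2:ℝ)⁻¹^(m+1)) ((2:ℝ)⁻¹^(n+1)) := le_max_left _ _

lemma vol_shl (m : ℕ) : volume (shl m) = ENNReal.ofReal ((2:ℝ)⁻¹^(m+1)) := by
  rw [shl, Real.volume_Ioc]
  congr 1
  rw [pow_succ]
  ring

lemma setLIntegral_ge_const {s : Set ℝ} {g : ℝ → ℝ≥0∞} (hg : Measurable g) (c : ℝ≥0∞)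
    (hb : ∀ t ∈ s, c ≤ g t) : c * volume s ≤ ∫⁻ t in s, g t := by
  rw [← setLIntegral_const s c]
  exact setLIntegral_mono hg hb

lemma log2_pos : (0:ℝ) < Real.log 2 := Real.log_pos one_lt_two

lemma log2_lt_one : Real.log 2 < 1 :=
  lt_trans Real.log_two_lt_d9 (by norm_num)

lemma shell_mem {m : ℕ} {t : ℝ} (ht : t ∈ shl m) :
    0 < t ∧ t ≤ 1 ∧ (2:ℝ)^m ≤ t⁻¹ ∧
    ((m:ℝ)+2) * Real.log 2 ≤ Real.log (4/t) ∧
    Real.log (4/t) ≤ ((m:ℝ)+3) * Real.log 2 := by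
  obtain ⟨ht1, ht2⟩ := ht
  have hp0 : (0:ℝ) < (2:ℝ)⁻¹^(m+1) := by positivity
  have ht0 : 0 < t := lt_trans hp0 ht1
  have hle1 : t ≤ 1 := le_trans ht2 (pow_le_one₀ (by norm_num) (by norm_num))
  refine ⟨ht0, hle1, ?_, ?_, ?_⟩
  · rw [inv_pow] at ht2
    calc (2:ℝ)^m = (((2:ℝ)^m)⁻¹)⁻¹ := by rw [inv_inv]
      _ ≤ t⁻¹ := by
        apply inv_anti₀ ht0 ht2
  · have h1 : (2:ℝ)^(m+2) ≤ 4/t := by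
      rw [le_div_iff₀ ht0, inv_pow] at *
      calc (2:ℝ)^(m+2) * t ≤ (2:ℝ)^(m+2) * ((2:ℝ)^m)⁻¹ := by
            apply mul_le_mul_of_nonneg_left ht2 (by positivity)
        _ = 4 := by
            rw [pow_add]
            field_simp
            ring
    calc ((m:ℝ)+2) * Real.log 2 = Real.log ((2:ℝ)^(m+2)) := by
          rw [Real.log_pow]; push_cast; ring
      _ ≤ Real.log (4/t) := Real.log_le_log (by positivity) h1
  · have h1 : 4/t ≤ (2:ℝ)^(m+3) := by
      rw [div_le_iff₀ ht0]
      have := ht1.le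
      calc (4:ℝ) = (2:ℝ)^(m+3) * (2:ℝ)⁻¹^(m+1) := by
            rw [pow_add, pow_add, inv_pow]
            field_simp
            ring
        _ ≤ (2:ℝ)^(m+3) * t := by
            apply mul_le_mul_of_nonneg_left this (by positivity)
    calc Real.log (4/t) ≤ Real.log ((2:ℝ)^(m+3)) := Real.log_le_log (by positivity) h1
      _ = ((m:ℝ)+3) * Real.log 2 := by rw [Real.log_pow]; push_cast; ring

lemma w_rpow_eq (p l : ℝ) (hp : 1 < p) {t : ℝ} (ht0 : 0 < t) (ht1 : t ≤ 1) :
    (wfn p l t) ^ (-1/(p-1)) = t⁻¹ * (Real.log (4/t)) ^ (-(l/(p-1))) := by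
  have hq : (0:ℝ) < p - 1 := by linarith
  have h4t : 1 < 4/t := by rw [lt_div_iff₀ ht0]; linarith
  have hL : 0 < Real.log (4/t) := Real.log_pos h4t
  rw [wfn, if_pos ht1, Real.mul_rpow (Real.rpow_nonneg ht0.le _) (Real.rpow_nonneg hL.le _),
    ← Real.rpow_mul ht0.le, ← Real.rpow_mul hL.le]
  congr 1
  · rw [show (p-1) * (-1/(p-1)) = -1 by field_simp, Real.rpow_neg_one]
  · congr 1
    field_simp

lemma one_lt_log4 : (1:ℝ) < Real.log 4 := by
  have h4 : (4:ℝ) = 2^2 := by norm_num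
  rw [h4, Real.log_pow]
  have := Real.log_two_gt_d9
  push_cast
  linarith

lemma shell_bound1 (p l : ℝ) (hp : 1 < p) (hl : l ≤ p - 1) (m : ℕ) {t : ℝ}
    (ht : t ∈ shl m) :
    (2:ℝ)^m * ((m:ℝ)+3)⁻¹ ≤ (wfn p l t) ^ (-1/(p-1)) := by
  obtain ⟨ht0, ht1, hti, hLlb, hLub⟩ := shell_mem ht
  have hq : (0:ℝ) < p - 1 := by linarith
  have hL1 : (1:ℝ) ≤ Real.log (4/t) := by
    calc (1:ℝ) ≤ Real.log 4 := one_lt_log4.le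
      _ = Real.log (4/1) := by norm_num
      _ ≤ Real.log (4/t) := by
        apply Real.log_le_log (by norm_num)
        apply div_le_div_of_nonneg_left (by norm_num) ht0 ht1
  have hL0 : (0:ℝ) < Real.log (4/t) := lt_of_lt_of_le one_pos hL1
  have hLm3 : Real.log (4/t) ≤ (m:ℝ)+3 := by
    calc Real.log (4/t) ≤ ((m:ℝ)+3) * Real.log 2 := hLub
      _ ≤ ((m:ℝ)+3) * 1 := by
          apply mul_le_mul_of_nonneg_left log2_lt_one.le (by positivity)
      _ = (m:ℝ)+3 := mul_one _
  rw [w_rpow_eq p l hp ht0 ht1]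
  apply mul_le_mul hti _ (by positivity) (by positivity)
  calc ((m:ℝ)+3)⁻¹ ≤ (Real.log (4/t))⁻¹ := by
        apply inv_anti₀ hL0 hLm3
    _ = (Real.log (4/t)) ^ (-1 : ℝ) := (Real.rpow_neg_one _).symm
    _ ≤ (Real.log (4/t)) ^ (-(l/(p-1))) := by
        apply Real.rpow_le_rpow_of_exponent_le hL1
        rw [neg_le_neg_iff]
        rw [div_le_one hq]
        exact hl

lemma shell_bound2 (p l : ℝ) (hp : 1 < p) (hl : 0 < l) (k j : ℕ) (hj : j ≤ k + 2) {t : ℝ}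
    (ht : t ∈ shl (k+j)) :
    (2:ℝ)^(k+j) * (2*((k:ℝ)+3) * Real.log 2) ^ (-(l/(p-1))) ≤ (wfn p l t) ^ (-1/(p-1)) := by
  obtain ⟨ht0, ht1, hti, hLlb, hLub⟩ := shell_mem ht
  have hq : (0:ℝ) < p - 1 := by linarith
  have hL0 : (0:ℝ) < Real.log (4/t) := by
    apply lt_of_lt_of_le _ hLlb
    positivity
  rw [w_rpow_eq p l hp ht0 ht1]
  apply mul_le_mul hti _ (by positivity) (by positivity)
  apply Real.rpow_le_rpow_of_nonpos hL0
  · calc Real.log (4/t) ≤ (((k:ℝ)+(j:ℝ))+3) * Real.log 2 := by push_cast at hLub ⊢; linarith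
      _ ≤ (2*((k:ℝ)+3)) * Real.log 2 := by
          apply mul_le_mul_of_nonneg_right _ log2_pos.le
          have : (j:ℝ) ≤ (k:ℝ) + 2 := by exact_mod_cast hj
          linarith
      _ = 2*((k:ℝ)+3) * Real.log 2 := by ring
  · rw [neg_nonpos]
    positivity

lemma strip_bound2 (p l : ℝ) (hp : 1 < p) (hl : 0 < l) (k : ℕ) {t : ℝ} (ht : t ∈ shl k) :
    ((2:ℝ)⁻¹^(k+1)) ^ (p-1) * (((k:ℝ)+2) * Real.log 2) ^ l ≤ wfn p l t := by
  obtain ⟨ht0, ht1, hti, hLlb, hLub⟩ := shell_mem ht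
  have hq : (0:ℝ) < p - 1 := by linarith
  rw [wfn, if_pos ht1]
  apply mul_le_mul
  · exact Real.rpow_le_rpow (by positivity) ht.1.le hq.le
  · exact Real.rpow_le_rpow (by positivity) hLlb hl.le
  · positivity
  · positivity

lemma strip_bound1 (p l : ℝ) (hp : 1 < p) {t : ℝ} (ht : t ∈ Set.Ioc (2⁻¹:ℝ) 1) :
    (2⁻¹:ℝ) ^ (p-1) * min ((Real.log 4)^l) ((Real.log 8)^l) ≤ wfn p l t := by
  obtain ⟨ht1, ht2⟩ := ht
  have ht0 : (0:ℝ) < t := lt_trans (by norm_num) ht1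
  have hq : (0:ℝ) < p - 1 := by linarith
  have hL4 : Real.log 4 ≤ Real.log (4/t) := by
    apply Real.log_le_log (by norm_num)
    calc (4:ℝ) = 4/1 := by norm_num
      _ ≤ 4/t := div_le_div_of_nonneg_left (by norm_num) ht0 ht2
  have hL8 : Real.log (4/t) ≤ Real.log 8 := by
    apply Real.log_le_log (by positivity)
    rw [div_le_iff₀ ht0]
    nlinarith
  have hL0 : (0:ℝ) < Real.log (4/t) := lt_of_lt_of_le (by linarith [one_lt_log4]) hL4
  rw [wfn, if_pos ht2]
  apply mul_le_mul
  · exact Real.rpow_le_rpow (by norm_num) ht1.le hq.le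
  · rcases le_or_gt 0 l with hl | hl
    · calc min ((Real.log 4)^l) ((Real.log 8)^l) ≤ (Real.log 4)^l := min_le_left _ _
        _ ≤ (Real.log (4/t))^l := Real.rpow_le_rpow (by linarith [one_lt_log4]) hL4 hl
    · calc min ((Real.log 4)^l) ((Real.log 8)^l) ≤ (Real.log 8)^l := min_le_right _ _
        _ ≤ (Real.log (4/t))^l := Real.rpow_le_rpow_of_nonpos hL0 hL8 hl.le
  · apply le_min <;> positivity
  · positivity

lemma tsum_harmonic_top :
    ∑' m : ℕ, ENNReal.ofReal ((2:ℝ)⁻¹ * ((m:ℝ)+3)⁻¹) = ⊤ := by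
  by_contra hne
  have hsum : Summable (fun m : ℕ => ((2:ℝ)⁻¹ * ((m:ℝ)+3)⁻¹).toNNReal) :=
    ENNReal.tsum_coe_ne_top_iff_summable.1 (by simpa [ENNReal.ofReal] using hne)
  have hs : Summable (fun m : ℕ => (2:ℝ)⁻¹ * ((m:ℝ)+3)⁻¹) := by
    have h2 := NNReal.summable_coe.2 hsum
    convert h2 using 2 with m
    rw [Real.coe_toNNReal]
    positivity
  have hs2 : Summable (fun m : ℕ => ((m:ℝ)+3)⁻¹) := by
    have h3 := hs.mul_left 2
    refine h3.congr (fun m => ?_)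
    rw [← mul_assoc]
    norm_num
  have hs3 : Summable (fun n : ℕ => ((n:ℝ))⁻¹) := by
    apply (summable_nat_add_iff 3).1
    exact hs2.congr (fun m => by simp)
  have := Real.not_summable_natCast_inv
  exact this hs3

lemma gw_meas (p l : ℝ) : Measurable (fun t => ENNReal.ofReal ((wfn p l t) ^ (-1/(p-1)))) :=
  ENNReal.measurable_ofReal.comp ((wfn_meas p l).pow measurable_const)

lemma w_meas' (p l : ℝ) : Measurable (fun t => ENNReal.ofReal (wfn p l t)) :=
  ENNReal.measurable_ofReal.comp (wfn_meas p l)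

lemma shell_int1 (p l : ℝ) (hp : 1 < p) (hl : l ≤ p - 1) (m : ℕ) :
    ENNReal.ofReal ((2:ℝ)⁻¹ * ((m:ℝ)+3)⁻¹) ≤
      ∫⁻ t in shl m, ENNReal.ofReal ((wfn p l t) ^ (-1/(p-1))) := by
  have hb := setLIntegral_ge_const (s := shl m) (gw_meas p l)
    (ENNReal.ofReal ((2:ℝ)^m * ((m:ℝ)+3)⁻¹))
    (fun t ht => ENNReal.ofReal_le_ofReal (shell_bound1 p l hp hl m ht))
  refine le_trans (le_of_eq ?_) hb
  rw [vol_shl, ← ENNReal.ofReal_mul (by positivity)]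
  congr 1
  rw [pow_succ, inv_pow]
  field_simp

lemma T2_top (p l : ℝ) (hp : 1 < p) (hl : l ≤ p - 1) :
    ∫⁻ t in Set.Ioc (0:ℝ) 1, ENNReal.ofReal ((wfn p l t) ^ (-1/(p-1))) = ⊤ := by
  rw [eq_top_iff]
  calc (⊤:ℝ≥0∞) = ∑' m : ℕ, ENNReal.ofReal ((2:ℝ)⁻¹ * ((m:ℝ)+3)⁻¹) := tsum_harmonic_top.symm
    _ ≤ ∑' m : ℕ, ∫⁻ t in shl m, ENNReal.ofReal ((wfn p l t) ^ (-1/(p-1))) :=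
        ENNReal.tsum_le_tsum (shell_int1 p l hp hl)
    _ = ∫⁻ t in ⋃ m, shl m, ENNReal.ofReal ((wfn p l t) ^ (-1/(p-1))) :=
        (lintegral_iUnion (fun _ => measurableSet_Ioc) shl_disj _).symm
    _ ≤ ∫⁻ t in Set.Ioc (0:ℝ) 1, ENNReal.ofReal ((wfn p l t) ^ (-1/(p-1))) := by
        apply lintegral_mono_set
        exact Set.iUnion_subset fun m => shl_subset (pow_le_one₀ (by norm_num) (by norm_num))

lemma T1_lb1 (p l : ℝ) (hp : 1 < p) :
    ENNReal.ofReal (((2⁻¹:ℝ) ^ (p-1) * min ((Real.log 4)^l) ((Real.log 8)^l)) * 2⁻¹) ≤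
      ∫⁻ t in Set.Ioc (0:ℝ) 1, ENNReal.ofReal (wfn p l t) := by
  have hsub : Set.Ioc (2⁻¹:ℝ) 1 ⊆ Set.Ioc (0:ℝ) 1 :=
    Set.Ioc_subset_Ioc (by norm_num) le_rfl
  have hb := setLIntegral_ge_const (s := Set.Ioc (2⁻¹:ℝ) 1) (w_meas' p l)
    (ENNReal.ofReal ((2⁻¹:ℝ) ^ (p-1) * min ((Real.log 4)^l) ((Real.log 8)^l)))
    (fun t ht => ENNReal.ofReal_le_ofReal (strip_bound1 p l hp ht))
  refine le_trans ?_ (le_trans hb (lintegral_mono_set hsub))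
  rw [Real.volume_Ioc, ← ENNReal.ofReal_mul (by positivity)]
  apply ENNReal.ofReal_le_ofReal
  norm_num

lemma T1_lb2 (p l : ℝ) (hp : 1 < p) (hl : 0 < l) (k : ℕ) :
    ENNReal.ofReal ((((2:ℝ)⁻¹^(k+1)) ^ (p-1) * (((k:ℝ)+2) * Real.log 2) ^ l) * (2:ℝ)⁻¹^(k+1)) ≤
      ∫⁻ t in Set.Ioc (0:ℝ) ((2:ℝ)⁻¹^k), ENNReal.ofReal (wfn p l t) := by
  have hsub : shl k ⊆ Set.Ioc 0 ((2:ℝ)⁻¹^k) := shl_subset le_rfl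
  have hb := setLIntegral_ge_const (s := shl k) (w_meas' p l)
    (ENNReal.ofReal (((2:ℝ)⁻¹^(k+1)) ^ (p-1) * (((k:ℝ)+2) * Real.log 2) ^ l))
    (fun t ht => ENNReal.ofReal_le_ofReal (strip_bound2 p l hp hl k ht))
  refine le_trans (le_of_eq ?_) (le_trans hb (lintegral_mono_set hsub))
  rw [vol_shl, ← ENNReal.ofReal_mul (by positivity)]

lemma T2_lb2 (p l : ℝ) (hp : 1 < p) (hl : 0 < l) (k : ℕ) :
    (((k:ℕ)+3 : ℕ) : ℝ≥0∞) * ENNReal.ofReal ((2:ℝ)⁻¹ * (2*((k:ℝ)+3) * Real.log 2) ^ (-(l/(p-1)))) ≤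
      ∫⁻ t in Set.Ioc (0:ℝ) ((2:ℝ)⁻¹^k), ENNReal.ofReal ((wfn p l t) ^ (-1/(p-1))) := by
  have hshell : ∀ j ∈ Finset.range (k+3),
      ENNReal.ofReal ((2:ℝ)⁻¹ * (2*((k:ℝ)+3) * Real.log 2) ^ (-(l/(p-1)))) ≤
        ∫⁻ t in shl (k+j), ENNReal.ofReal ((wfn p l t) ^ (-1/(p-1))) := by
    intro j hj
    have hj' : j ≤ k + 2 := by simpa using Nat.lt_succ_iff.1 (Finset.mem_range.1 hj)
    have hb := setLIntegral_ge_const (s := shl (k+j)) (gw_meas p l)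
      (ENNReal.ofReal ((2:ℝ)^(k+j) * (2*((k:ℝ)+3) * Real.log 2) ^ (-(l/(p-1)))))
      (fun t ht => ENNReal.ofReal_le_ofReal (shell_bound2 p l hp hl k j hj' ht))
    refine le_trans (le_of_eq ?_) hb
    rw [vol_shl, ← ENNReal.ofReal_mul (by positivity)]
    congr 1
    rw [pow_succ, inv_pow]
    field_simp
  calc (((k:ℕ)+3 : ℕ) : ℝ≥0∞) * ENNReal.ofReal ((2:ℝ)⁻¹ * (2*((k:ℝ)+3) * Real.log 2) ^ (-(l/(p-1))))
      = ∑ _j ∈ Finset.range (k+3),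
          ENNReal.ofReal ((2:ℝ)⁻¹ * (2*((k:ℝ)+3) * Real.log 2) ^ (-(l/(p-1)))) := by
        rw [Finset.sum_const, Finset.card_range, nsmul_eq_mul]
    _ ≤ ∑ j ∈ Finset.range (k+3),
          ∫⁻ t in shl (k+j), ENNReal.ofReal ((wfn p l t) ^ (-1/(p-1))) :=
        Finset.sum_le_sum hshell
    _ = ∫⁻ t in ⋃ j ∈ Finset.range (k+3), shl (k+j),
          ENNReal.ofReal ((wfn p l t) ^ (-1/(p-1))) := by
        refine (lintegral_biUnion_finset ?_ (fun _ _ => measurableSet_Ioc) _).symm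
        intro a _ b _ hab
        exact shl_disj (by omega)
    _ ≤ ∫⁻ t in Set.Ioc (0:ℝ) ((2:ℝ)⁻¹^k), ENNReal.ofReal ((wfn p l t) ^ (-1/(p-1))) := by
        apply lintegral_mono_set
        apply Set.iUnion₂_subset
        intro j _
        exact shl_subset (pow_le_pow_of_le_one (by norm_num) (by norm_num) (by omega))

lemma keyineq (q l : ℝ) (hq : 0 < q) (hl : 0 < l) (k : ℕ) :
    (4:ℝ)⁻¹^l * (4:ℝ)⁻¹^q * 2⁻¹ * (((k:ℝ)+3))^q ≤
      ((((2:ℝ)⁻¹^(k+1)) ^ q * (((k:ℝ)+2) * Real.log 2) ^ l * (2:ℝ)⁻¹^(k+1)) / (2:ℝ)⁻¹^k) *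
      ((((k:ℝ)+3) * ((2:ℝ)⁻¹ * (2*((k:ℝ)+3) * Real.log 2) ^ (-(l/q))) / (2:ℝ)⁻¹^k) ^ q) := by
  set h : ℝ := (2:ℝ)⁻¹^k with hh
  have h0 : 0 < h := by positivity
  have h2 : (2:ℝ)⁻¹^(k+1) = h/2 := by rw [hh, pow_succ]; ring
  set A : ℝ := ((k:ℝ)+2) * Real.log 2 with hA
  set B : ℝ := 2*((k:ℝ)+3) * Real.log 2 with hB
  set K : ℝ := (k:ℝ)+3 with hK
  have hk0 : (0:ℝ) ≤ (k:ℝ) := Nat.cast_nonneg k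
  have hA0 : 0 < A := by rw [hA]; positivity
  have hB0 : 0 < B := by rw [hB]; positivity
  have hK0 : 0 < K := by rw [hK]; positivity
  rw [h2]
  have e1 : ((h/2) ^ q * A ^ l * (h/2)) / h = (h/2)^q * A^l * 2⁻¹ := by
    field_simp
  have e2 : K * (2⁻¹ * B^(-(l/q))) / h = K * B^(-(l/q)) / (2*h) := by
    field_simp
  rw [e1, e2]
  have e3 : (K * B^(-(l/q)) / (2*h)) ^ q = K^q * B^(-(l/q)*q) / (2*h)^q := by
    rw [Real.div_rpow (by positivity) (by positivity),
      Real.mul_rpow (by positivity) (by positivity), ← Real.rpow_mul hB0.le]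
  have e4 : -(l/q)*q = -l := by field_simp
  rw [e3, e4]
  have e5 : (h/2)^q = (4⁻¹:ℝ)^q * (2*h)^q := by
    rw [← Real.mul_rpow (by norm_num) (by positivity)]
    congr 1
    field_simp
    ring
  have e6 : A^l = (A/B)^l * B^l := by
    rw [← Real.mul_rpow (by positivity) (by positivity)]
    congr 1
    field_simp
  have e7 : B^(-l) = (B^l)⁻¹ := Real.rpow_neg hB0.le l
  have e8 : ((h/2)^q * A^l * 2⁻¹) * (K^q * B^(-l) / (2*h)^q) =
      (A/B)^l * ((4⁻¹:ℝ)^q * 2⁻¹ * K^q) := by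
    rw [e5, e6, e7]
    have hX2 : (2*h)^q ≠ 0 := by positivity
    have hX4 : B^l ≠ 0 := by positivity
    field_simp
  rw [e8]
  have e9 : (4⁻¹:ℝ)^l ≤ (A/B)^l := by
    apply Real.rpow_le_rpow (by norm_num) _ hl.le
    rw [le_div_iff₀ hB0, hA, hB]
    nlinarith [log2_pos, hk0]
  calc (4⁻¹:ℝ)^l * (4⁻¹)^q * 2⁻¹ * K^q = (4⁻¹:ℝ)^l * ((4⁻¹:ℝ)^q * 2⁻¹ * K^q) := by ring
    _ ≤ (A/B)^l * ((4⁻¹:ℝ)^q * 2⁻¹ * K^q) := mul_le_mul_of_nonneg_right e9 (by positivity)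

lemma choose_k (q C c₀ : ℝ) (hq : 0 < q) (hC : 0 < C) (hc : 0 < c₀) :
    ∃ k : ℕ, C < c₀ * (((k:ℝ)+3))^q := by
  obtain ⟨N, hN⟩ := exists_nat_gt ((C/c₀) ^ (1/q))
  refine ⟨N, ?_⟩
  have h1 : (C/c₀) ^ (1/q) < (N:ℝ)+3 := lt_of_lt_of_le hN (by linarith)
  have h2 : ((C/c₀) ^ (1/q))^q < ((N:ℝ)+3)^q :=
    Real.rpow_lt_rpow (Real.rpow_nonneg (by positivity) _) h1 hq
  rw [← Real.rpow_mul (by positivity), one_div, inv_mul_cancel₀ hq.ne', Real.rpow_one] at h2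
  rw [div_lt_iff₀ hc] at h2
  linarith

/-- For `p > 1` and any `λ ∈ ℝ`, the weight `t^{p-1} (log (4/t))^λ` is not an `A_p` weight:
no constant `C > 0` makes the `A_p` product over all cubes in the upper half space
bounded by `C`. -/
theorem stmt2 (d : ℕ) (hd : 1 ≤ d) (p l : ℝ) (hp : 1 < p) :
    ¬ ∃ C : ℝ, 0 < C ∧
      ∀ (a : Fin (d + 1) → ℝ) (h : ℝ), 0 < h →
        (∀ x ∈ Set.univ.pi (fun i => Set.Ioc (a i) (a i + h)), 0 < x (Fin.last d)) →
        ((∫⁻ y in Set.univ.pi (fun i => Set.Ioc (a i) (a i + h)),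
            ENNReal.ofReal (borderWeight d p l y)) /
          volume (Set.univ.pi (fun i => Set.Ioc (a i) (a i + h)))) *
        (((∫⁻ y in Set.univ.pi (fun i => Set.Ioc (a i) (a i + h)),
            ENNReal.ofReal ((borderWeight d p l y) ^ (-1 / (p - 1)))) /
          volume (Set.univ.pi (fun i => Set.Ioc (a i) (a i + h)))) ^ (p - 1)) ≤
        ENNReal.ofReal C := by
  rintro ⟨C, hC, hbound⟩
  have hq : (0:ℝ) < p - 1 := by linarith
  rcases le_or_gt l (p-1) with hl | hl
  · -- divergent case
    have hpos : ∀ x ∈ Set.univ.pi (fun i : Fin (d+1) =>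
        Set.Ioc ((fun _ : Fin (d+1) => (0:ℝ)) i) ((fun _ : Fin (d+1) => (0:ℝ)) i + 1)),
        0 < x (Fin.last d) := fun x hx => (hx (Fin.last d) (Set.mem_univ _)).1
    have hb := hbound (fun _ => 0) 1 one_pos hpos
    simp only [zero_add, borderWeight_eq] at hb
    have L1a : ∫⁻ y in Set.univ.pi (fun _ : Fin (d+1) => Set.Ioc (0:ℝ) 1),
        ENNReal.ofReal (wfn p l (y (Fin.last d))) =
        (volume (Set.Ioc (0:ℝ) 1))^d * ∫⁻ t in Set.Ioc (0:ℝ) 1, ENNReal.ofReal (wfn p l t) :=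
      lint_pi d (fun t => ENNReal.ofReal (wfn p l t)) (w_meas' p l) 1
    have L1b : ∫⁻ y in Set.univ.pi (fun _ : Fin (d+1) => Set.Ioc (0:ℝ) 1),
        ENNReal.ofReal ((wfn p l (y (Fin.last d))) ^ (-1 / (p - 1))) =
        (volume (Set.Ioc (0:ℝ) 1))^d *
          ∫⁻ t in Set.Ioc (0:ℝ) 1, ENNReal.ofReal ((wfn p l t) ^ (-1 / (p - 1))) :=
      lint_pi d (fun t => ENNReal.ofReal ((wfn p l t) ^ (-1 / (p - 1)))) (gw_meas p l) 1
    rw [L1a, L1b] at hb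
    have hIoc : volume (Set.Ioc (0:ℝ) 1) = 1 := by
      rw [Real.volume_Ioc, sub_zero, ENNReal.ofReal_one]
    have hV : volume (Set.univ.pi fun _ : Fin (d+1) => Set.Ioc (0:ℝ) 1) = 1 := by
      rw [volume_pi_pi]
      simp [hIoc]
    rw [hV, hIoc, T2_top p l hp hl] at hb
    simp only [one_pow, one_mul, div_one] at hb
    rw [ENNReal.top_rpow_of_pos hq] at hb
    have hm : (0:ℝ) < (2⁻¹:ℝ) ^ (p-1) * min ((Real.log 4)^l) ((Real.log 8)^l) * 2⁻¹ := by
      have h4 : (0:ℝ) < Real.log 4 := by linarith [one_lt_log4]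
      have h8 : (0:ℝ) < Real.log 8 := Real.log_pos (by norm_num)
      have hmin : 0 < min ((Real.log 4)^l) ((Real.log 8)^l) :=
        lt_min (by positivity) (by positivity)
      positivity
    have hT1 : (∫⁻ t in Set.Ioc (0:ℝ) 1, ENNReal.ofReal (wfn p l t)) ≠ 0 := by
      refine ne_of_gt (lt_of_lt_of_le ?_ (T1_lb1 p l hp))
      exact ENNReal.ofReal_pos.2 hm
    rw [ENNReal.mul_top hT1] at hb
    exact ENNReal.ofReal_ne_top (top_le_iff.1 hb)
  · -- convergent case
    have hl0 : 0 < l := lt_trans hq hl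
    obtain ⟨k, hk⟩ := choose_k (p-1) C ((4:ℝ)⁻¹^l * (4:ℝ)⁻¹^(p-1) * 2⁻¹) hq hC (by positivity)
    set h : ℝ := (2:ℝ)⁻¹^k with hh
    have h0 : 0 < h := by positivity
    have hpos : ∀ x ∈ Set.univ.pi (fun i : Fin (d+1) =>
        Set.Ioc ((fun _ : Fin (d+1) => (0:ℝ)) i) ((fun _ : Fin (d+1) => (0:ℝ)) i + h)),
        0 < x (Fin.last d) := fun x hx => (hx (Fin.last d) (Set.mem_univ _)).1
    have hb := hbound (fun _ => 0) h h0 hpos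
    simp only [zero_add, borderWeight_eq] at hb
    have L1a : ∫⁻ y in Set.univ.pi (fun _ : Fin (d+1) => Set.Ioc 0 h),
        ENNReal.ofReal (wfn p l (y (Fin.last d))) =
        (volume (Set.Ioc (0:ℝ) h))^d * ∫⁻ t in Set.Ioc (0:ℝ) h, ENNReal.ofReal (wfn p l t) :=
      lint_pi d (fun t => ENNReal.ofReal (wfn p l t)) (w_meas' p l) h
    have L1b : ∫⁻ y in Set.univ.pi (fun _ : Fin (d+1) => Set.Ioc 0 h),
        ENNReal.ofReal ((wfn p l (y (Fin.last d))) ^ (-1 / (p - 1))) =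
        (volume (Set.Ioc (0:ℝ) h))^d *
          ∫⁻ t in Set.Ioc (0:ℝ) h, ENNReal.ofReal ((wfn p l t) ^ (-1 / (p - 1))) :=
      lint_pi d (fun t => ENNReal.ofReal ((wfn p l t) ^ (-1 / (p - 1)))) (gw_meas p l) h
    rw [L1a, L1b] at hb
    have hV : volume (Set.univ.pi fun _ : Fin (d+1) => Set.Ioc (0:ℝ) h) =
        (volume (Set.Ioc (0:ℝ) h))^(d+1) := by
      rw [volume_pi_pi]
      simp [Finset.prod_const]
    rw [hV] at hb
    set av := volume (Set.Ioc (0:ℝ) h) with hav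
    have haeq : av = ENNReal.ofReal h := by rw [hav, Real.volume_Ioc, sub_zero]
    have ha0 : av^d ≠ 0 := pow_ne_zero _ (by rw [haeq]; exact (ENNReal.ofReal_pos.2 h0).ne')
    have hatop : av^d ≠ ⊤ := by
      rw [haeq]; exact ENNReal.pow_ne_top ENNReal.ofReal_ne_top
    have hdiv : ∀ X : ℝ≥0∞, (av^d * X) / av^(d+1) = X / av := by
      intro X; rw [pow_succ]; exact ENNReal.mul_div_mul_left X av ha0 hatop
    rw [hdiv, hdiv] at hb
    set T₁ := ∫⁻ t in Set.Ioc (0:ℝ) h, ENNReal.ofReal (wfn p l t) with hT₁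
    set T₂ := ∫⁻ t in Set.Ioc (0:ℝ) h, ENNReal.ofReal ((wfn p l t) ^ (-1 / (p - 1))) with hT₂
    set r₁ : ℝ := ((2:ℝ)⁻¹^(k+1)) ^ (p-1) * (((k:ℝ)+2) * Real.log 2) ^ l * (2:ℝ)⁻¹^(k+1) with hr₁
    set r₂ : ℝ := (2:ℝ)⁻¹ * (2*((k:ℝ)+3) * Real.log 2) ^ (-(l/(p-1))) with hr₂
    have hr₁0 : 0 < r₁ := by rw [hr₁]; positivity
    have hr₂0 : 0 < r₂ := by rw [hr₂]; positivity
    have hA1 : ENNReal.ofReal (r₁ / h) ≤ T₁ / av := by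
      rw [ENNReal.ofReal_div_of_pos h0, ← haeq]
      exact ENNReal.div_le_div_right (T1_lb2 p l hp hl0 k) av
    have hA2 : ENNReal.ofReal (((k:ℝ)+3) * r₂ / h) ≤ T₂ / av := by
      rw [ENNReal.ofReal_div_of_pos h0, ← haeq]
      refine ENNReal.div_le_div_right ?_ av
      refine le_trans (le_of_eq ?_) (T2_lb2 p l hp hl0 k)
      rw [ENNReal.ofReal_mul (by positivity)]
      congr 1
      rw [← ENNReal.ofReal_natCast (k+3)]
      congr 1
      push_cast
      ring
    have hP : ENNReal.ofReal ((r₁/h) * ((((k:ℝ)+3) * r₂ / h) ^ (p-1))) ≤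
        (T₁/av) * ((T₂/av)^(p-1)) := by
      rw [ENNReal.ofReal_mul (by positivity)]
      apply mul_le_mul' hA1
      rw [← ENNReal.ofReal_rpow_of_pos (by positivity)]
      exact ENNReal.rpow_le_rpow hA2 hq.le
    have hkey : (4:ℝ)⁻¹^l * (4:ℝ)⁻¹^(p-1) * 2⁻¹ * (((k:ℝ)+3))^(p-1) ≤
        (r₁/h) * ((((k:ℝ)+3) * r₂ / h) ^ (p-1)) :=
      keyineq (p-1) l hq hl0 k
    have hcontr : ENNReal.ofReal C < ENNReal.ofReal C := by
      calc ENNReal.ofReal C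
          < ENNReal.ofReal ((4:ℝ)⁻¹^l * (4:ℝ)⁻¹^(p-1) * 2⁻¹ * (((k:ℝ)+3))^(p-1)) := by
            exact (ENNReal.ofReal_lt_ofReal_iff (by positivity)).2 hk
        _ ≤ ENNReal.ofReal ((r₁/h) * ((((k:ℝ)+3) * r₂ / h) ^ (p-1))) :=
            ENNReal.ofReal_le_ofReal hkey
        _ ≤ (T₁/av) * ((T₂/av)^(p-1)) := hP
        _ ≤ ENNReal.ofReal C := hb
    exact lt_irrefl _ hcontr
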